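/- arXiv:math/0606134 — 5 statements merged into one kernel-verified Lean document; each statement's English description precedes it below -/
import Mathlib

section
/- In U_q(sl4^+), with X1 = e1, X4 = e2, X6 = e3, X2 = e1 e2 - q^{-1} e2 e1, X5 = e2 e3 - q^{-1} e3 e2, X3 = e1 X5 - q^{-1} X5 e1, the element Delta_1 = X3 satisfies e2 * Delta_1 = Delta_1 * e2, e1 * Delta_1 = q * Delta_1 * e1, and e3 * Delta_1 = q^{-1} * Delta_1 * e3. -/
/-!
Expanding `Δ₁ = [e1, [e2, e3]_q]_q` (with `[x, y]_q = x y - q⁻¹ y x`) into four monomials, the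
identities for `e1` and `e3` are linear combinations of the Serre relation of that generator with
`e2`, multiplied on either side by the other outer generator, using `e1 e3 = e3 e1`. For `e2` one
also needs `e2 e1 e2 e3 + e3 e2 e1 e2 = e1 e2 e3 e2 + e2 e3 e2 e1`: the two Serre relations of `e2`
give it multiplied by `q + q⁻¹`, which is nonzero because `q⁴ ≠ 1`.
-/

noncomputable section

open FreeAlgebra

/-- The defining relations of `U_q(sl4^+)`: `e1 e3 = e3 e1` and the quantum Serre
relations `e_i^2 e_j - (q+q⁻¹) e_i e_j e_i + e_j e_i^2 = 0` for `|i-j| = 1`. -/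
inductive UqRel (K : Type) [Field K] (q : K) :
    FreeAlgebra K (Fin 3) → FreeAlgebra K (Fin 3) → Prop
  | comm : UqRel K q (ι K 0 * ι K 2) (ι K 2 * ι K 0)
  | serre (i j : Fin 3) (h : i.val = j.val + 1 ∨ j.val = i.val + 1) :
      UqRel K q (ι K i * ι K i * ι K j + ι K j * (ι K i * ι K i))
        ((q + q⁻¹) • (ι K i * ι K j * ι K i))

/-- The quantized enveloping algebra `U_q(sl4^+)`. -/
abbrev Uq (K : Type) [Field K] (q : K) := RingQuot (UqRel K q)

/-- The Chevalley generators `e1, e2, e3` of `U_q(sl4^+)`. -/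
def gen (K : Type) [Field K] (q : K) (i : Fin 3) : Uq K q :=
  RingQuot.mkAlgHom K (UqRel K q) (ι K i)

def X1 (K : Type) [Field K] (q : K) : Uq K q := gen K q 0
def X4 (K : Type) [Field K] (q : K) : Uq K q := gen K q 1
def X6 (K : Type) [Field K] (q : K) : Uq K q := gen K q 2
def X2 (K : Type) [Field K] (q : K) : Uq K q :=
  X1 K q * X4 K q - q⁻¹ • (X4 K q * X1 K q)
def X5 (K : Type) [Field K] (q : K) : Uq K q :=
  X4 K q * X6 K q - q⁻¹ • (X6 K q * X4 K q)
def X3 (K : Type) [Field K] (q : K) : Uq K q :=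
  X1 K q * X5 K q - q⁻¹ • (X5 K q * X1 K q)

def Delta1 (K : Type) [Field K] (q : K) : Uq K q := X3 K q
def Delta2 (K : Type) [Field K] (q : K) : Uq K q :=
  X2 K q * X5 K q - q • (X3 K q * X4 K q)
def Delta3 (K : Type) [Field K] (q : K) : Uq K q :=
  ((q - q⁻¹) ^ 2) • (X1 K q * X4 K q * X6 K q) - (q * (q - q⁻¹)) • (X2 K q * X6 K q)
    - (q * (q - q⁻¹)) • (X1 K q * X5 K q) + (q ^ 2) • X3 K q

section QuantumSerre

variable {K A : Type*} [Field K] [Ring A] [Algebra K A]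

def qComm (q : K) (x y : A) : A := x * y - q⁻¹ • (y * x)

def IsQSerre (q : K) (x y : A) : Prop :=
  x * x * y + y * (x * x) = (q + q⁻¹) • (x * y * x)

variable {q : K} {a b c : A}

theorem qComm_qComm_eq (q : K) (a b c : A) :
    qComm q a (qComm q b c) = a * (b * c) - q⁻¹ • (a * (c * b)) - q⁻¹ • (b * (c * a))
      + (q⁻¹ * q⁻¹) • (c * (b * a)) := by
  simp only [qComm, mul_sub, sub_mul, smul_mul_assoc, mul_smul_comm, smul_smul, smul_sub,
    mul_assoc]
  abel

theorem mul_qComm_qComm_left (hq : q ≠ 0) (hac : Commute a c) (hab : IsQSerre q a b) :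
    a * qComm q a (qComm q b c) = q • (qComm q a (qComm q b c) * a) := by
  rw [qComm_qComm_eq]
  linear_combination (norm := skip) congrArg (· * c) hab - q⁻¹ • congrArg (c * ·) hab
  simp only [mul_add, add_mul, sub_mul, mul_sub, smul_mul_assoc, mul_smul_comm, mul_assoc,
    hac.eq, hac.left_comm, smul_smul, smul_sub, smul_add]
  match_scalars <;> field_simp <;> ring

theorem mul_qComm_qComm_right (hq : q ≠ 0) (hac : Commute a c) (hcb : IsQSerre q c b) :
    c * qComm q a (qComm q b c) = q⁻¹ • (qComm q a (qComm q b c) * c) := by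
  rw [qComm_qComm_eq]
  linear_combination (norm := skip)
    (q⁻¹ * q⁻¹) • congrArg (· * a) hcb - q⁻¹ • congrArg (a * ·) hcb
  simp only [mul_add, add_mul, sub_mul, mul_sub, smul_mul_assoc, mul_smul_comm, mul_assoc,
    hac.eq, hac.left_comm, smul_smul, smul_sub, smul_add]
  match_scalars <;> field_simp <;> ring

theorem babc_add_cbab (ht : q + q⁻¹ ≠ 0) (hac : Commute a c) (hba : IsQSerre q b a)
    (hbc : IsQSerre q b c) :
    b * (a * (b * c)) + c * (b * (a * b)) = a * (b * (c * b)) + b * (c * (b * a)) := by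
  refine smul_right_injective A ht ?_
  calc (q + q⁻¹) • (b * (a * (b * c)) + c * (b * (a * b)))
      = (b * b * a + a * (b * b)) * c + c * (b * b * a + a * (b * b)) := by
        rw [hba, smul_add, smul_mul_assoc, mul_smul_comm]; simp only [mul_assoc]
    _ = a * (b * b * c + c * (b * b)) + (b * b * c + c * (b * b)) * a := by
        simp only [add_mul, mul_add, mul_assoc, hac.eq, hac.left_comm]; abel
    _ = (q + q⁻¹) • (a * (b * (c * b)) + b * (c * (b * a))) := by
        rw [hbc, smul_add, smul_mul_assoc, mul_smul_comm]; simp only [mul_assoc]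

theorem mul_qComm_qComm_middle (ht : q + q⁻¹ ≠ 0) (hac : Commute a c) (hba : IsQSerre q b a)
    (hbc : IsQSerre q b c) :
    b * qComm q a (qComm q b c) = qComm q a (qComm q b c) * b := by
  have hq : q ≠ 0 := by rintro rfl; simp at ht
  rw [qComm_qComm_eq]
  linear_combination (norm := skip)
    q⁻¹ • congrArg (a * ·) hbc - q⁻¹ • congrArg (· * c) hba
      - (q⁻¹ * q⁻¹) • babc_add_cbab ht hac hba hbc
  simp only [mul_add, add_mul, sub_mul, mul_sub, smul_mul_assoc, mul_smul_comm, mul_assoc,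
    hac.eq, hac.left_comm, smul_smul, smul_add]
  match_scalars <;> field_simp <;> ring

end QuantumSerre

section Uq

variable {K : Type} [Field K] {q : K}

theorem commute_gen_zero_two : Commute (gen K q 0) (gen K q 2) := by
  simpa only [Commute, SemiconjBy, gen, map_mul] using
    RingQuot.mkAlgHom_rel K (UqRel.comm (q := q))

theorem isQSerre_gen (i j : Fin 3) (h : i.val = j.val + 1 ∨ j.val = i.val + 1) :
    IsQSerre q (gen K q i) (gen K q j) := by
  simpa only [IsQSerre, gen, map_mul, map_add, map_smul] using
    RingQuot.mkAlgHom_rel K (UqRel.serre (q := q) i j h)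

theorem Delta1_eq_qComm : Delta1 K q = qComm q (gen K q 0) (qComm q (gen K q 1) (gen K q 2)) :=
  rfl

end Uq

theorem add_inv_ne_zero_of_pow_four_ne_one {K : Type*} [Field K] {q : K} (hq0 : q ≠ 0)
    (hq4 : q ^ 4 ≠ 1) : q + q⁻¹ ≠ 0 := by
  intro h
  have h2 : q ^ 2 = -1 := by field_simp at h; linear_combination h
  exact hq4 (by rw [show 4 = 2 * 2 from rfl, pow_mul, h2]; norm_num)

theorem stmt2_general (K : Type) [Field K] (q : K) (hq0 : q ≠ 0)
    (hq : ∀ n : ℕ, 0 < n → q ^ n ≠ 1) :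
    gen K q 1 * Delta1 K q = Delta1 K q * gen K q 1 ∧
    gen K q 0 * Delta1 K q = q • (Delta1 K q * gen K q 0) ∧
    gen K q 2 * Delta1 K q = q⁻¹ • (Delta1 K q * gen K q 2) := by
  rw [Delta1_eq_qComm]
  exact ⟨mul_qComm_qComm_middle (add_inv_ne_zero_of_pow_four_ne_one hq0 (hq 4 (by norm_num)))
      commute_gen_zero_two (isQSerre_gen 1 0 (.inl rfl)) (isQSerre_gen 1 2 (.inr rfl)),
    mul_qComm_qComm_left hq0 commute_gen_zero_two (isQSerre_gen 0 1 (.inr rfl)),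
    mul_qComm_qComm_right hq0 commute_gen_zero_two (isQSerre_gen 2 1 (.inl rfl))⟩

/-- `Δ₁ = X3` satisfies `e2 Δ₁ = Δ₁ e2`, `e1 Δ₁ = q Δ₁ e1`
and `e3 Δ₁ = q⁻¹ Δ₁ e3`. -/
theorem stmt2 (K : Type) [Field K] [CharZero K] (q : K) (hq0 : q ≠ 0)
    (hq : ∀ n : ℕ, 0 < n → q ^ n ≠ 1) :
    gen K q 1 * Delta1 K q = Delta1 K q * gen K q 1 ∧
    gen K q 0 * Delta1 K q = q • (Delta1 K q * gen K q 0) ∧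
    gen K q 2 * Delta1 K q = q⁻¹ • (Delta1 K q * gen K q 2) :=
  stmt2_general K q hq0 hq
end
end

section
/- In U_q(sl4^+), the element Delta_2 = X2*X5 - q*X3*X4, where X2 = e1 e2 - q^{-1} e2 e1, X5 = e2 e3 - q^{-1} e3 e2, X3 = e1 X5 - q^{-1} X5 e1 and X4 = e2, commutes with each of the generators e1, e2, e3, hence is central. -/
noncomputable section

open FreeAlgebra

set_option maxHeartbeats 1600000 in
theorem comm_a {K : Type} [Field K] (q : K) (hq0 : q ≠ 0)
    (h2 : (1:K) + q^2 ≠ 0) (h3 : (1:K) + q^2 + q^4 ≠ 0)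
    {A : Type} [Ring A] [Algebra K A] (a b c : A)
    (hac : a * c = c * a)
    (hab : a * a * b + b * (a * a) = (q + q⁻¹) • (a * b * a))
    (hba : b * b * a + a * (b * b) = (q + q⁻¹) • (b * a * b))
    (hbc : b * b * c + c * (b * b) = (q + q⁻¹) • (b * c * b))
    (hcb : c * c * b + b * (c * c) = (q + q⁻¹) • (c * b * c)) :
    a * ((a * b - q⁻¹ • (b * a)) * (b * c - q⁻¹ • (c * b)) - q • ((a * (b * c - q⁻¹ • (c * b)) - q⁻¹ • ((b * c - q⁻¹ • (c * b)) * a)) * b)) = ((a * b - q⁻¹ • (b * a)) * (b * c - q⁻¹ • (c * b)) - q • ((a * (b * c - q⁻¹ • (c * b)) - q⁻¹ • ((b * c - q⁻¹ • (c * b)) * a)) * b)) * a := by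
  have hz1 : a * c - c * a = 0 := sub_eq_zero_of_eq hac
  have hz2 : a * a * b + b * (a * a) - (q + q⁻¹) • (a * b * a) = 0 := sub_eq_zero_of_eq hab
  have hz3 : b * b * a + a * (b * b) - (q + q⁻¹) • (b * a * b) = 0 := sub_eq_zero_of_eq hba
  have hz4 : b * b * c + c * (b * b) - (q + q⁻¹) • (b * c * b) = 0 := sub_eq_zero_of_eq hbc
  have hz5 : c * c * b + b * (c * c) - (q + q⁻¹) • (c * b * c) = 0 := sub_eq_zero_of_eq hcb
  have key : (q^2*(1+q^2)*(1+q^2+q^4)) • (a * ((a * b - q⁻¹ • (b * a)) * (b * c - q⁻¹ • (c * b)) - q • ((a * (b * c - q⁻¹ • (c * b)) - q⁻¹ • ((b * c - q⁻¹ • (c * b)) * a)) * b)) - ((a * b - q⁻¹ • (b * a)) * (b * c - q⁻¹ • (c * b)) - q • ((a * (b * c - q⁻¹ • (c * b)) - q⁻¹ • ((b * c - q⁻¹ • (c * b)) * a)) * b)) * a) =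
      ((q^2 + q^4 + q^6) : K) • ((a * c - c * a) * (a * b * b)) +
      ((-q - 2*q^3 - 2*q^5 - q^7) : K) • ((a * c - c * a) * (b * a * b)) +
      ((q^2 + q^4 + q^6) : K) • ((a) * (a * c - c * a) * (b * b)) +
      ((-q^2 - 2*q^4 - 2*q^6 - q^8) : K) • ((a * b) * (a * c - c * a) * (b)) +
      ((q + 2*q^3 + 2*q^5 + q^7) : K) • ((b) * (a * c - c * a) * (a * b)) +
      ((-1 - 2*q^2 - 2*q^4 - q^6) : K) • ((b) * (a * c - c * a) * (b * a)) +
      ((q + 2*q^3 + 2*q^5 + q^7) : K) • ((b * a) * (a * c - c * a) * (b)) +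
      ((-q - 2*q^3 - 2*q^5 - q^7) : K) • ((b * a * b) * (a * c - c * a)) +
      ((q^2 + q^4 + q^6) : K) • ((b * b) * (a * c - c * a) * (a)) +
      ((q^2 + q^4 + q^6) : K) • ((b * b * a) * (a * c - c * a)) +
      ((q^2 + q^4 + q^6) : K) • ((a * a * b + b * (a * a) - (q + q⁻¹) • (a * b * a)) * (b * c)) +
      ((-q - 2*q^3 - 2*q^5 - q^7) : K) • ((a * a * b + b * (a * a) - (q + q⁻¹) • (a * b * a)) * (c * b)) +
      ((-q^2 - q^4 - q^6) : K) • ((b) * (a * a * b + b * (a * a) - (q + q⁻¹) • (a * b * a)) * (c)) +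
      ((q + 2*q^3 + 2*q^5 + q^7) : K) • ((b * c) * (a * a * b + b * (a * a) - (q + q⁻¹) • (a * b * a))) +
      ((q^2 + q^4 + q^6) : K) • ((c) * (a * a * b + b * (a * a) - (q + q⁻¹) • (a * b * a)) * (b)) +
      ((-q^2 - q^4 - q^6) : K) • ((c * b) * (a * a * b + b * (a * a) - (q + q⁻¹) • (a * b * a))) +
      ((q^2 + q^4 + q^6) : K) • ((b * b * c + c * (b * b) - (q + q⁻¹) • (b * c * b)) * (a * a)) +
      ((-q^2 - 2*q^4 - 2*q^6 - q^8) : K) • ((a) * (b * b * c + c * (b * b) - (q + q⁻¹) • (b * c * b)) * (a)) +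
      ((q^4 + q^6 + q^8) : K) • ((a * a) * (b * b * c + c * (b * b) - (q + q⁻¹) • (b * c * b))) := by
    simp only [mul_add, add_mul, mul_sub, sub_mul, smul_add, smul_sub, smul_mul_assoc, mul_smul_comm, smul_smul, mul_assoc]
    match_scalars <;> field_simp <;> ring
  simp only [hz1, hz2, hz3, hz4, hz5, zero_mul, mul_zero, smul_zero, add_zero, zero_add] at key
  have hd : (q^2*(1+q^2)*(1+q^2+q^4)) ≠ 0 := mul_ne_zero (mul_ne_zero (pow_ne_zero 2 hq0) h2) h3
  have h0 := congrArg (fun x => (q^2*(1+q^2)*(1+q^2+q^4))⁻¹ • x) key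
  simp only [smul_smul, inv_mul_cancel₀ hd, one_smul, smul_zero] at h0
  exact sub_eq_zero.mp h0

set_option maxHeartbeats 1600000 in
theorem comm_b {K : Type} [Field K] (q : K) (hq0 : q ≠ 0)
    (h2 : (1:K) + q^2 ≠ 0) (h3 : (1:K) + q^2 + q^4 ≠ 0)
    {A : Type} [Ring A] [Algebra K A] (a b c : A)
    (hac : a * c = c * a)
    (hab : a * a * b + b * (a * a) = (q + q⁻¹) • (a * b * a))
    (hba : b * b * a + a * (b * b) = (q + q⁻¹) • (b * a * b))
    (hbc : b * b * c + c * (b * b) = (q + q⁻¹) • (b * c * b))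
    (hcb : c * c * b + b * (c * c) = (q + q⁻¹) • (c * b * c)) :
    b * ((a * b - q⁻¹ • (b * a)) * (b * c - q⁻¹ • (c * b)) - q • ((a * (b * c - q⁻¹ • (c * b)) - q⁻¹ • ((b * c - q⁻¹ • (c * b)) * a)) * b)) = ((a * b - q⁻¹ • (b * a)) * (b * c - q⁻¹ • (c * b)) - q • ((a * (b * c - q⁻¹ • (c * b)) - q⁻¹ • ((b * c - q⁻¹ • (c * b)) * a)) * b)) * b := by
  have hz1 : a * c - c * a = 0 := sub_eq_zero_of_eq hac
  have hz2 : a * a * b + b * (a * a) - (q + q⁻¹) • (a * b * a) = 0 := sub_eq_zero_of_eq hab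
  have hz3 : b * b * a + a * (b * b) - (q + q⁻¹) • (b * a * b) = 0 := sub_eq_zero_of_eq hba
  have hz4 : b * b * c + c * (b * b) - (q + q⁻¹) • (b * c * b) = 0 := sub_eq_zero_of_eq hbc
  have hz5 : c * c * b + b * (c * c) - (q + q⁻¹) • (c * b * c) = 0 := sub_eq_zero_of_eq hcb
  have key : (q^2*(1+q^2)*(1+q^2+q^4)) • (b * ((a * b - q⁻¹ • (b * a)) * (b * c - q⁻¹ • (c * b)) - q • ((a * (b * c - q⁻¹ • (c * b)) - q⁻¹ • ((b * c - q⁻¹ • (c * b)) * a)) * b)) - ((a * b - q⁻¹ • (b * a)) * (b * c - q⁻¹ • (c * b)) - q • ((a * (b * c - q⁻¹ • (c * b)) - q⁻¹ • ((b * c - q⁻¹ • (c * b)) * a)) * b)) * b) =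
      ((-q^2 - 2*q^4 - q^6) : K) • ((a * c - c * a) * (b * b * b)) +
      ((2*q^2 + 3*q^4 + 3*q^6 + q^8) : K) • ((b) * (a * c - c * a) * (b * b)) +
      ((-q^2 - 2*q^4 - 2*q^6 - q^8) : K) • ((b * b) * (a * c - c * a) * (b)) +
      ((q^4) : K) • ((b * b * b) * (a * c - c * a)) +
      ((-q - 3*q^3 - 3*q^5 - q^7) : K) • ((b * b * a + a * (b * b) - (q + q⁻¹) • (b * a * b)) * (b * c)) +
      ((1 + 3*q^2 + 4*q^4 + 3*q^6 + q^8) : K) • ((b * b * a + a * (b * b) - (q + q⁻¹) • (b * a * b)) * (c * b)) +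
      ((-q^4) : K) • ((b) * (b * b * a + a * (b * b) - (q + q⁻¹) • (b * a * b)) * (c)) +
      ((q^2 + q^4 + q^6) : K) • ((b * c) * (b * b * a + a * (b * b) - (q + q⁻¹) • (b * a * b))) +
      ((-q^2 - 2*q^4 - q^6) : K) • ((c) * (b * b * a + a * (b * b) - (q + q⁻¹) • (b * a * b)) * (b)) +
      ((-q^3 - q^5) : K) • ((c * b) * (b * b * a + a * (b * b) - (q + q⁻¹) • (b * a * b))) +
      ((q^3 + q^5) : K) • ((b * b * c + c * (b * b) - (q + q⁻¹) • (b * c * b)) * (b * a)) +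
      ((-q^6 - q^8) : K) • ((a) * (b * b * c + c * (b * b) - (q + q⁻¹) • (b * c * b)) * (b)) +
      ((q + 3*q^3 + 3*q^5 + q^7) : K) • ((a * b) * (b * b * c + c * (b * b) - (q + q⁻¹) • (b * c * b))) +
      ((q^4) : K) • ((b) * (b * b * c + c * (b * b) - (q + q⁻¹) • (b * c * b)) * (a)) +
      ((-1 - 3*q^2 - 3*q^4 - 2*q^6) : K) • ((b * a) * (b * b * c + c * (b * b) - (q + q⁻¹) • (b * c * b))) := by
    simp only [mul_add, add_mul, mul_sub, sub_mul, smul_add, smul_sub, smul_mul_assoc, mul_smul_comm, smul_smul, mul_assoc]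
    match_scalars <;> field_simp <;> ring
  simp only [hz1, hz2, hz3, hz4, hz5, zero_mul, mul_zero, smul_zero, add_zero, zero_add] at key
  have hd : (q^2*(1+q^2)*(1+q^2+q^4)) ≠ 0 := mul_ne_zero (mul_ne_zero (pow_ne_zero 2 hq0) h2) h3
  have h0 := congrArg (fun x => (q^2*(1+q^2)*(1+q^2+q^4))⁻¹ • x) key
  simp only [smul_smul, inv_mul_cancel₀ hd, one_smul, smul_zero] at h0
  exact sub_eq_zero.mp h0

set_option maxHeartbeats 1600000 in
theorem comm_c {K : Type} [Field K] (q : K) (hq0 : q ≠ 0)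
    (h2 : (1:K) + q^2 ≠ 0) (h3 : (1:K) + q^2 + q^4 ≠ 0)
    {A : Type} [Ring A] [Algebra K A] (a b c : A)
    (hac : a * c = c * a)
    (hab : a * a * b + b * (a * a) = (q + q⁻¹) • (a * b * a))
    (hba : b * b * a + a * (b * b) = (q + q⁻¹) • (b * a * b))
    (hbc : b * b * c + c * (b * b) = (q + q⁻¹) • (b * c * b))
    (hcb : c * c * b + b * (c * c) = (q + q⁻¹) • (c * b * c)) :
    c * ((a * b - q⁻¹ • (b * a)) * (b * c - q⁻¹ • (c * b)) - q • ((a * (b * c - q⁻¹ • (c * b)) - q⁻¹ • ((b * c - q⁻¹ • (c * b)) * a)) * b)) = ((a * b - q⁻¹ • (b * a)) * (b * c - q⁻¹ • (c * b)) - q • ((a * (b * c - q⁻¹ • (c * b)) - q⁻¹ • ((b * c - q⁻¹ • (c * b)) * a)) * b)) * c := by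
  have hz1 : a * c - c * a = 0 := sub_eq_zero_of_eq hac
  have hz2 : a * a * b + b * (a * a) - (q + q⁻¹) • (a * b * a) = 0 := sub_eq_zero_of_eq hab
  have hz3 : b * b * a + a * (b * b) - (q + q⁻¹) • (b * a * b) = 0 := sub_eq_zero_of_eq hba
  have hz4 : b * b * c + c * (b * b) - (q + q⁻¹) • (b * c * b) = 0 := sub_eq_zero_of_eq hbc
  have hz5 : c * c * b + b * (c * c) - (q + q⁻¹) • (c * b * c) = 0 := sub_eq_zero_of_eq hcb
  have key : (q^2*(1+q^2)*(1+q^2+q^4)) • (c * ((a * b - q⁻¹ • (b * a)) * (b * c - q⁻¹ • (c * b)) - q • ((a * (b * c - q⁻¹ • (c * b)) - q⁻¹ • ((b * c - q⁻¹ • (c * b)) * a)) * b)) - ((a * b - q⁻¹ • (b * a)) * (b * c - q⁻¹ • (c * b)) - q • ((a * (b * c - q⁻¹ • (c * b)) - q⁻¹ • ((b * c - q⁻¹ • (c * b)) * a)) * b)) * c) =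
      ((-q^2 - 2*q^4 - 2*q^6 - q^8) : K) • ((a * c - c * a) * (b * b * c)) +
      ((q + 3*q^3 + 4*q^5 + 3*q^7 + q^9) : K) • ((a * c - c * a) * (b * c * b)) +
      ((-q^2 - 2*q^4 - 2*q^6 - q^8) : K) • ((a * c - c * a) * (c * b * b)) +
      ((q^2 + 2*q^4 + 2*q^6 + q^8) : K) • ((b) * (a * c - c * a) * (b * c)) +
      ((-q - 2*q^3 - 2*q^5 - q^7) : K) • ((b) * (a * c - c * a) * (c * b)) +
      ((-q - 2*q^3 - 2*q^5 - q^7) : K) • ((b * c) * (a * c - c * a) * (b)) +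
      ((1 + 2*q^2 + 2*q^4 + q^6) : K) • ((c * b) * (a * c - c * a) * (b)) +
      ((-q^2 - 2*q^4 - 2*q^6 - q^8) : K) • ((a) * (b * b * c + c * (b * b) - (q + q⁻¹) • (b * c * b)) * (c)) +
      ((q^2 + 2*q^4 + 2*q^6 + q^8) : K) • ((a * c) * (b * b * c + c * (b * b) - (q + q⁻¹) • (b * c * b))) +
      ((-q - 2*q^3 - 2*q^5 - q^7) : K) • ((c * c * b + b * (c * c) - (q + q⁻¹) • (c * b * c)) * (a * b)) +
      ((q + 2*q^3 + 2*q^5 + q^7) : K) • ((b * a) * (c * c * b + b * (c * c) - (q + q⁻¹) • (c * b * c))) := by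
    simp only [mul_add, add_mul, mul_sub, sub_mul, smul_add, smul_sub, smul_mul_assoc, mul_smul_comm, smul_smul, mul_assoc]
    match_scalars <;> field_simp <;> ring
  simp only [hz1, hz2, hz3, hz4, hz5, zero_mul, mul_zero, smul_zero, add_zero, zero_add] at key
  have hd : (q^2*(1+q^2)*(1+q^2+q^4)) ≠ 0 := mul_ne_zero (mul_ne_zero (pow_ne_zero 2 hq0) h2) h3
  have h0 := congrArg (fun x => (q^2*(1+q^2)*(1+q^2+q^4))⁻¹ • x) key
  simp only [smul_smul, inv_mul_cancel₀ hd, one_smul, smul_zero] at h0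
  exact sub_eq_zero.mp h0

/-- `Δ₂ = X2 X5 - q X3 X4` commutes with each of the generators
`e1, e2, e3`, hence is central. -/
theorem stmt3 (K : Type) [Field K] [CharZero K] (q : K) (hq0 : q ≠ 0)
    (hq : ∀ n : ℕ, 0 < n → q ^ n ≠ 1) :
    (∀ i : Fin 3, gen K q i * Delta2 K q = Delta2 K q * gen K q i) ∧
      Delta2 K q ∈ Subalgebra.center K (Uq K q) := by
  have h2 : (1:K) + q^2 ≠ 0 := by
    intro h
    exact hq 4 (by norm_num) (by linear_combination (q^2 - 1) * h)
  have h3 : (1:K) + q^2 + q^4 ≠ 0 := by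
    intro h
    exact hq 6 (by norm_num) (by linear_combination (q^2 - 1) * h)
  have hac : gen K q 0 * gen K q 2 = gen K q 2 * gen K q 0 := by
    have h := RingQuot.mkAlgHom_rel K (@UqRel.comm K _ q)
    simp only [map_mul] at h
    exact h
  have hab : gen K q 0 * gen K q 0 * gen K q 1 + gen K q 1 * (gen K q 0 * gen K q 0)
      = (q + q⁻¹) • (gen K q 0 * gen K q 1 * gen K q 0) := by
    have h := RingQuot.mkAlgHom_rel K (UqRel.serre (K := K) (q := q) 0 1 (by decide))
    simp only [map_add, map_mul, map_smul] at h
    exact h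
  have hba : gen K q 1 * gen K q 1 * gen K q 0 + gen K q 0 * (gen K q 1 * gen K q 1)
      = (q + q⁻¹) • (gen K q 1 * gen K q 0 * gen K q 1) := by
    have h := RingQuot.mkAlgHom_rel K (UqRel.serre (K := K) (q := q) 1 0 (by decide))
    simp only [map_add, map_mul, map_smul] at h
    exact h
  have hbc : gen K q 1 * gen K q 1 * gen K q 2 + gen K q 2 * (gen K q 1 * gen K q 1)
      = (q + q⁻¹) • (gen K q 1 * gen K q 2 * gen K q 1) := by
    have h := RingQuot.mkAlgHom_rel K (UqRel.serre (K := K) (q := q) 1 2 (by decide))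
    simp only [map_add, map_mul, map_smul] at h
    exact h
  have hcb : gen K q 2 * gen K q 2 * gen K q 1 + gen K q 1 * (gen K q 2 * gen K q 2)
      = (q + q⁻¹) • (gen K q 2 * gen K q 1 * gen K q 2) := by
    have h := RingQuot.mkAlgHom_rel K (UqRel.serre (K := K) (q := q) 2 1 (by decide))
    simp only [map_add, map_mul, map_smul] at h
    exact h
  have key : ∀ i : Fin 3, gen K q i * Delta2 K q = Delta2 K q * gen K q i := by
    intro i
    fin_cases i
    · exact comm_a q hq0 h2 h3 (gen K q 0) (gen K q 1) (gen K q 2) hac hab hba hbc hcb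
    · exact comm_b q hq0 h2 h3 (gen K q 0) (gen K q 1) (gen K q 2) hac hab hba hbc hcb
    · exact comm_c q hq0 h2 h3 (gen K q 0) (gen K q 1) (gen K q 2) hac hab hba hbc hcb
  refine ⟨key, ?_⟩
  rw [Subalgebra.mem_center_iff]
  intro z
  obtain ⟨x, rfl⟩ := RingQuot.mkAlgHom_surjective K (UqRel K q) z
  induction x using FreeAlgebra.induction with
  | grade0 r =>
    rw [AlgHom.commutes]
    exact Algebra.commutes r _
  | grade1 i => exact key i
  | mul x y hx hy => rw [map_mul, mul_assoc, hy, ← mul_assoc, hx, mul_assoc]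
  | add x y hx hy => rw [map_add, add_mul, mul_add, hx, hy]
end
end

section
/- In U_q(sl4^+), the element Delta_3 = (q-q^{-1})^2 X1 X4 X6 - q(q-q^{-1}) X2 X6 - q(q-q^{-1}) X1 X5 + q^2 X3 satisfies e1 * Delta_3 = q^{-1} * Delta_3 * e1, e2 * Delta_3 = Delta_3 * e2, and e3 * Delta_3 = q * Delta_3 * e3. -/
noncomputable section

open FreeAlgebra

/-- `e1` and `e3` commute in `U_q(sl4^+)`. -/
lemma hac (K : Type) [Field K] (q : K) :
    gen K q 0 * gen K q 2 = gen K q 2 * gen K q 0 := by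
  have h := RingQuot.mkAlgHom_rel K (UqRel.comm (K := K) (q := q))
  simpa only [map_mul, gen] using h

/-- The quantum Serre relations in `U_q(sl4^+)`. -/
lemma hserre (K : Type) [Field K] (q : K) (i j : Fin 3)
    (h : i.val = j.val + 1 ∨ j.val = i.val + 1) :
    gen K q i * gen K q i * gen K q j + gen K q j * (gen K q i * gen K q i)
      = (q + q⁻¹) • (gen K q i * gen K q j * gen K q i) := by
  have h2 := RingQuot.mkAlgHom_rel K (UqRel.serre (K := K) (q := q) i j h)
  simpa only [map_add, map_mul, map_smul, gen] using h2

/-- Normal form of `Δ₃` modulo `e1 e3 = e3 e1`. -/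
lemma delta3_eq (K : Type) [Field K] (q : K) (hq0 : q ≠ 0) :
    Delta3 K q = (q⁻¹ * q⁻¹) • (gen K q 0 * (gen K q 1 * gen K q 2))
      - q⁻¹ • (gen K q 2 * (gen K q 0 * gen K q 1))
      - q⁻¹ • (gen K q 1 * (gen K q 2 * gen K q 0))
      + gen K q 2 * (gen K q 1 * gen K q 0) := by
  set a := gen K q 0 with ha
  set b := gen K q 1 with hb
  set c := gen K q 2 with hc
  have zac : a * c - c * a = 0 := sub_eq_zero.mpr (hac K q)
  have key : Delta3 K q - ((q⁻¹ * q⁻¹) • (a * (b * c)) - q⁻¹ • (c * (a * b))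
      - q⁻¹ • (b * (c * a)) + c * (b * a))
      = (q - q⁻¹) • (b * (a * c - c * a)) - q⁻¹ • ((a * c - c * a) * b) := by
    simp only [Delta3, X1, X2, X3, X4, X5, X6, ← ha, ← hb, ← hc,
      smul_sub, smul_add, smul_smul, mul_sub, sub_mul, mul_add, add_mul,
      smul_mul_assoc, mul_smul_comm, mul_assoc]
    match_scalars <;> field_simp <;> ring
  rw [zac] at key
  simp only [mul_zero, zero_mul, smul_zero, sub_zero, zero_sub, neg_zero,
    sub_eq_zero] at key
  exact key

/-- `Δ₃` satisfies `e1 Δ₃ = q⁻¹ Δ₃ e1`, `e2 Δ₃ = Δ₃ e2` and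
`e3 Δ₃ = q Δ₃ e3`. -/
theorem stmt4 (K : Type) [Field K] [CharZero K] (q : K) (hq0 : q ≠ 0)
    (hq : ∀ n : ℕ, 0 < n → q ^ n ≠ 1) :
    gen K q 0 * Delta3 K q = q⁻¹ • (Delta3 K q * gen K q 0) ∧
    gen K q 1 * Delta3 K q = Delta3 K q * gen K q 1 ∧
    gen K q 2 * Delta3 K q = q • (Delta3 K q * gen K q 2) := by
  have ht : q + q⁻¹ ≠ 0 := by
    intro h
    have h2 : q * q + 1 = 0 := by
      have h3 := congrArg (· * q) h
      simpa [add_mul, inv_mul_cancel₀ hq0] using h3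
    exact hq 4 (by norm_num) (by linear_combination (q * q - 1) * h2)
  rw [delta3_eq K q hq0]
  set a := gen K q 0 with ha
  set b := gen K q 1 with hb
  set c := gen K q 2 with hc
  set D := (q⁻¹ * q⁻¹) • (a * (b * c)) - q⁻¹ • (c * (a * b))
      - q⁻¹ • (b * (c * a)) + c * (b * a) with hD
  have zac : a * c - c * a = 0 := sub_eq_zero.mpr (hac K q)
  have z12 : a * a * b + b * (a * a) - (q + q⁻¹) • (a * b * a) = 0 :=
    sub_eq_zero.mpr (hserre K q 0 1 (Or.inr rfl))
  have z21 : b * b * a + a * (b * b) - (q + q⁻¹) • (b * a * b) = 0 :=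
    sub_eq_zero.mpr (hserre K q 1 0 (Or.inl rfl))
  have z23 : b * b * c + c * (b * b) - (q + q⁻¹) • (b * c * b) = 0 :=
    sub_eq_zero.mpr (hserre K q 1 2 (Or.inr rfl))
  have z32 : c * c * b + b * (c * c) - (q + q⁻¹) • (c * b * c) = 0 :=
    sub_eq_zero.mpr (hserre K q 2 1 (Or.inl rfl))
  refine ⟨?_, ?_, ?_⟩
  · -- e1 Δ₃ = q⁻¹ Δ₃ e1
    have key : (q ^ 2) • (a * D) - q • (D * a)
        = (a * a * b + b * (a * a) - (q + q⁻¹) • (a * b * a)) * c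
          - q • (c * (a * a * b + b * (a * a) - (q + q⁻¹) • (a * b * a)))
          - q • ((a * c - c * a) * (a * b))
          + (q ^ 2) • ((a * c - c * a) * (b * a))
          - b * (a * (a * c - c * a))
          + (q + q⁻¹) • (a * (b * (a * c - c * a)))
          - b * ((a * c - c * a) * a) := by
      simp only [hD, smul_sub, smul_add, smul_smul, mul_sub, sub_mul, mul_add,
        add_mul, smul_mul_assoc, mul_smul_comm, mul_assoc]
      match_scalars <;> field_simp <;> ring
    rw [z12, zac] at key
    simp only [mul_zero, zero_mul, smul_zero, sub_zero, zero_sub, add_zero,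
      neg_zero, zero_add, sub_eq_zero] at key
    calc a * D = ((q ^ 2)⁻¹ * q ^ 2) • (a * D) := by
          rw [inv_mul_cancel₀ (pow_ne_zero 2 hq0), one_smul]
      _ = (q ^ 2)⁻¹ • ((q ^ 2) • (a * D)) := (smul_smul _ _ _).symm
      _ = (q ^ 2)⁻¹ • (q • (D * a)) := by rw [key]
      _ = ((q ^ 2)⁻¹ * q) • (D * a) := smul_smul _ _ _
      _ = q⁻¹ • (D * a) := by
          congr 1
          field_simp
  · -- e2 Δ₃ = Δ₃ e2
    have key : (q + q⁻¹) • (b * D - D * b)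
        = -((q⁻¹ * q⁻¹) • ((b * b * a + a * (b * b) - (q + q⁻¹) • (b * a * b)) * c))
          + c * (b * b * a + a * (b * b) - (q + q⁻¹) • (b * a * b))
          + (q⁻¹ * q⁻¹) • (a * (b * b * c + c * (b * b) - (q + q⁻¹) • (b * c * b)))
          - (b * b * c + c * (b * b) - (q + q⁻¹) • (b * c * b)) * a
          + (q⁻¹ * q⁻¹) • (b * (b * (a * c - c * a)))
          - (q⁻¹ * q⁻¹) • ((a * c - c * a) * (b * b)) := by
      simp only [hD, smul_sub, smul_add, smul_smul, mul_sub, sub_mul, mul_add,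
        add_mul, smul_mul_assoc, mul_smul_comm, mul_assoc]
      match_scalars <;> field_simp <;> ring
    rw [z21, z23, zac] at key
    simp only [mul_zero, zero_mul, smul_zero, sub_zero, zero_sub, add_zero,
      neg_zero, zero_add, neg_neg] at key
    have h0 : b * D - D * b = 0 := by
      have := congrArg (fun x => (q + q⁻¹)⁻¹ • x) key
      simpa [smul_smul, inv_mul_cancel₀ ht] using this
    exact sub_eq_zero.mp h0
  · -- e3 Δ₃ = q Δ₃ e3
    have key : c * D - q • (D * c)
        = -(q⁻¹ • (a * (c * c * b + b * (c * c) - (q + q⁻¹) • (c * b * c))))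
          + (c * c * b + b * (c * c) - (q + q⁻¹) • (c * b * c)) * a
          + b * (c * (a * c - c * a))
          - q • (c * (b * (a * c - c * a)))
          + q⁻¹ • ((a * c - c * a) * (c * b))
          - (1 + q⁻¹ * q⁻¹) • ((a * c - c * a) * (b * c))
          + q⁻¹ • (c * ((a * c - c * a) * b)) := by
      simp only [hD, smul_sub, smul_add, smul_smul, mul_sub, sub_mul, mul_add,
        add_mul, smul_mul_assoc, mul_smul_comm, mul_assoc]
      match_scalars <;> field_simp <;> ring
    rw [z32, zac] at key
    simp only [mul_zero, zero_mul, smul_zero, sub_zero, zero_sub, add_zero,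
      neg_zero, zero_add, sub_eq_zero] at key
    exact key
end
end

section
/- Let A = ⨁_{i∈ℕ} A_i be an ℕ-graded K-algebra with A_0 = K, generated by A_1 = Kx_1 ⊕ ... ⊕ Kx_n, such that for each i there exist a nonzero a ∈ A and a scalar q_{i,a} ≠ 1 with x_i a = q_{i,a} a x_i. Then for any K-algebra automorphism sigma of A and any nonzero homogeneous element x of degree d, one can write sigma(x) = y_d + y_{>d} where y_d is a nonzero element of A_d and y_{>d} lies in ⨁_{i ≥ d+1} A_i. -/
/-!
Write `A_{≥k}` for `⨁_{i ≥ k} A_i`. If `u` `c`-commutes with some `b ≠ 0`, `c ≠ 1`, then `u`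
has no constant term: its degree-0 part is a scalar `t`, and comparing the lowest nonzero
components `b_m` on both sides of `u b = c (b u)` gives `t b_m = c t b_m`. Applied to
`σ(x_i)`, this shows that `σ` maps `A_1` into `A_{≥1}`; since `A_d ⊆ A_1^d`, it maps `A_d`
into `A_{≥d}`, and the same holds for `σ⁻¹`. So `σ(y) ∈ A_{≥d}`, and its degree-`d`
component is nonzero, as otherwise `y = σ⁻¹(σ y) ∈ A_{≥d+1}`.
-/

open DirectSum

theorem Submodule.adjoin_le_iSup_pow {R A : Type*} [CommSemiring R] [Semiring A] [Algebra R A]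
    (M : Submodule R A) :
    Subalgebra.toSubmodule (Algebra.adjoin R (M : Set A)) ≤ ⨆ k, M ^ k := by
  rw [Algebra.adjoin_eq_span, Submodule.span_le]
  intro a ha
  obtain ⟨k, hk⟩ : ∃ k, a ∈ M ^ k := by
    induction ha using Submonoid.closure_induction with
    | mem a ha => exact ⟨1, by rwa [pow_one]⟩
    | one => exact ⟨0, by rw [pow_zero]; exact Submodule.one_le.mp le_rfl⟩
    | mul a b _ _ ha hb =>
      obtain ⟨i, hi⟩ := ha
      obtain ⟨j, hj⟩ := hb
      exact ⟨i + j, by rw [pow_add]; exact Submodule.mul_mem_mul hi hj⟩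
  exact Submodule.mem_iSup_of_mem k hk

namespace GradedAlgebra

section Semiring

variable {R A : Type*} [CommSemiring R] [Semiring A] [Algebra R A] (𝒜 : ℕ → Submodule R A)

def degreeGE (k : ℕ) : Submodule R A := ⨆ i, ⨆ (_ : k ≤ i), 𝒜 i

theorem le_degreeGE (k : ℕ) : 𝒜 k ≤ degreeGE 𝒜 k :=
  le_iSup₂_of_le k le_rfl le_rfl

theorem degreeGE_antitone : Antitone (degreeGE 𝒜) :=
  fun _ _ hkl => iSup₂_mono' fun i hli => ⟨i, hkl.trans hli, le_rfl⟩

variable [GradedAlgebra 𝒜]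

theorem coe_decompose_smul (r : R) (a : A) (j : ℕ) :
    (decompose 𝒜 (r • a) j : A) = r • (decompose 𝒜 a j : A) := by
  rw [decompose_smul]
  rfl

variable {𝒜} in
theorem mem_degreeGE_iff {a : A} {k : ℕ} :
    a ∈ degreeGE 𝒜 k ↔ ∀ j < k, (decompose 𝒜 a j : A) = 0 := by
  classical
  constructor
  · intro ha j hj
    refine Submodule.iSup_induction _ (motive := fun a => (decompose 𝒜 a j : A) = 0) ha
      (fun i a ha => ?_) (by simp) fun a b ha hb => ?_
    · rcases le_or_gt k i with hki | hik
      · rw [iSup_pos hki] at ha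
        exact decompose_of_mem_ne 𝒜 ha (by omega)
      · rw [iSup_neg (not_le.mpr hik), Submodule.mem_bot] at ha
        simp [ha]
    · rw [decompose_add, DirectSum.add_apply, Submodule.coe_add, ha, hb, add_zero]
  · intro h
    rw [← sum_support_decompose 𝒜 a]
    refine Submodule.sum_mem _ fun j _ => ?_
    rcases lt_or_ge j k with hjk | hkj
    · rw [h j hjk]
      exact Submodule.zero_mem _
    · exact Submodule.mem_iSup_of_mem j (Submodule.mem_iSup_of_mem hkj (SetLike.coe_mem _))

variable {𝒜} in
theorem mem_degreeGE_succ_iff {a : A} {d : ℕ} :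
    a ∈ degreeGE 𝒜 (d + 1) ↔ a ∈ degreeGE 𝒜 d ∧ (decompose 𝒜 a d : A) = 0 := by
  simp only [mem_degreeGE_iff, Nat.lt_succ_iff_lt_or_eq, or_imp, forall_and, forall_eq]

variable {𝒜} in
theorem exists_mem_degreeGE_decompose_ne_zero {b : A} (hb : b ≠ 0) :
    ∃ m, b ∈ degreeGE 𝒜 m ∧ (decompose 𝒜 b m : A) ≠ 0 := by
  classical
  have hex : ∃ m, (decompose 𝒜 b m : A) ≠ 0 := by
    by_contra! h
    exact hb ((decompose 𝒜).injective (DFinsupp.ext fun m => Subtype.ext (by simp [h m])))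
  exact ⟨Nat.find hex, mem_degreeGE_iff.mpr fun j hj => not_not.mp (Nat.find_min hex hj),
    Nat.find_spec hex⟩

theorem degreeGE_mul_le (p q : ℕ) : degreeGE 𝒜 p * degreeGE 𝒜 q ≤ degreeGE 𝒜 (p + q) := by
  simp only [degreeGE, Submodule.iSup_mul, Submodule.mul_iSup]
  refine iSup₂_le fun j hj => iSup₂_le fun i hi => ?_
  refine le_iSup₂_of_le (i + j) (by omega) (Submodule.mul_le.mpr fun a ha b hb => ?_)
  exact SetLike.mul_mem_graded ha hb

theorem degreeGE_one_pow_le (k : ℕ) : degreeGE 𝒜 1 ^ k ≤ degreeGE 𝒜 k := by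
  induction k with
  | zero => exact Submodule.one_le.mpr (le_degreeGE 𝒜 0 SetLike.GradedOne.one_mem)
  | succ k ih =>
    rw [pow_succ]
    exact (mul_le_mul' ih le_rfl).trans (degreeGE_mul_le 𝒜 k 1)

theorem degreeOne_pow_le (k : ℕ) : 𝒜 1 ^ k ≤ 𝒜 k := by
  induction k with
  | zero => exact Submodule.one_le.mpr SetLike.GradedOne.one_mem
  | succ k ih =>
    rw [pow_succ]
    exact Submodule.mul_le.mpr fun a ha b hb => SetLike.mul_mem_graded (ih ha) hb

variable {𝒜}

theorem le_degreeOne_pow_of_adjoin_eq_top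
    (hgen : Algebra.adjoin R ((𝒜 1 : Submodule R A) : Set A) = ⊤) (d : ℕ) :
    𝒜 d ≤ 𝒜 1 ^ d := by
  intro a ha
  have ha' : a ∈ ⨆ k, 𝒜 1 ^ k :=
    Submodule.adjoin_le_iSup_pow (𝒜 1)
      (by rw [Subalgebra.mem_toSubmodule, hgen]; exact Algebra.mem_top)
  rw [← decompose_of_mem_same 𝒜 ha]
  refine Submodule.iSup_induction _ (motive := fun a => (decompose 𝒜 a d : A) ∈ 𝒜 1 ^ d) ha'
    (fun k b hb => ?_) (by simp) fun b c hb hc => ?_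
  · rcases eq_or_ne k d with rfl | hkd
    · rwa [decompose_of_mem_same 𝒜 (degreeOne_pow_le 𝒜 k hb)]
    · rw [decompose_of_mem_ne 𝒜 (degreeOne_pow_le 𝒜 k hb) hkd]
      exact Submodule.zero_mem _
  · rw [decompose_add, DirectSum.add_apply, Submodule.coe_add]
    exact Submodule.add_mem _ hb hc

theorem map_le_degreeGE (hgen : Algebra.adjoin R ((𝒜 1 : Submodule R A) : Set A) = ⊤)
    {f : A →ₐ[R] A} (hf : (𝒜 1).map f.toLinearMap ≤ degreeGE 𝒜 1) (d : ℕ) :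
    (𝒜 d).map f.toLinearMap ≤ degreeGE 𝒜 d :=
  calc (𝒜 d).map f.toLinearMap
      ≤ (𝒜 1 ^ d).map f.toLinearMap :=
        Submodule.map_mono (le_degreeOne_pow_of_adjoin_eq_top hgen d)
    _ = (𝒜 1).map f.toLinearMap ^ d := Submodule.map_pow (𝒜 1) f d
    _ ≤ degreeGE 𝒜 1 ^ d := pow_le_pow_left' hf d
    _ ≤ degreeGE 𝒜 d := degreeGE_one_pow_le 𝒜 d

theorem map_degreeGE_le (hgen : Algebra.adjoin R ((𝒜 1 : Submodule R A) : Set A) = ⊤)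
    {f : A →ₐ[R] A} (hf : (𝒜 1).map f.toLinearMap ≤ degreeGE 𝒜 1) (k : ℕ) :
    (degreeGE 𝒜 k).map f.toLinearMap ≤ degreeGE 𝒜 k := by
  simp only [degreeGE, Submodule.map_iSup]
  exact iSup₂_le fun i hki => (map_le_degreeGE hgen hf i).trans (degreeGE_antitone 𝒜 hki)

end Semiring

section Ring

variable {R A : Type*} [CommRing R] [Ring A] [Algebra R A] {𝒜 : ℕ → Submodule R A}
  [GradedAlgebra 𝒜]

theorem sub_decompose_mem_degreeGE_succ {a : A} {d : ℕ} (ha : a ∈ degreeGE 𝒜 d) :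
    a - decompose 𝒜 a d ∈ degreeGE 𝒜 (d + 1) := by
  refine mem_degreeGE_succ_iff.mpr ⟨sub_mem ha (le_degreeGE 𝒜 d (SetLike.coe_mem _)), ?_⟩
  rw [decompose_sub, DirectSum.sub_apply, Submodule.coe_sub,
    decompose_of_mem_same 𝒜 (SetLike.coe_mem _), sub_self]

end Ring

section Field

variable {K A : Type*} [Field K] [Ring A] [Algebra K A] {𝒜 : ℕ → Submodule K A}
  [GradedAlgebra 𝒜]

theorem mem_degreeGE_one_of_mul_eq_smul_mul (h0 : 𝒜 0 = Submodule.span K {(1 : A)}) {u b : A}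
    (hb : b ≠ 0) {c : K} (hc : c ≠ 1) (h : u * b = c • (b * u)) : u ∈ degreeGE 𝒜 1 := by
  classical
  obtain ⟨m, hbm, hbm0⟩ := exists_mem_degreeGE_decompose_ne_zero (𝒜 := 𝒜) hb
  obtain ⟨t, ht⟩ : ∃ t : K, t • (1 : A) = decompose 𝒜 u 0 :=
    Submodule.mem_span_singleton.mp (h0 ▸ SetLike.coe_mem _)
  have hu : u ∈ degreeGE 𝒜 0 := mem_degreeGE_iff.mpr fun j hj => absurd hj j.not_lt_zero
  have hr : u - decompose 𝒜 u 0 ∈ degreeGE 𝒜 (0 + 1) := sub_decompose_mem_degreeGE_succ hu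
  have hrb := mem_degreeGE_iff.mp (degreeGE_mul_le 𝒜 _ _ (Submodule.mul_mem_mul hr hbm)) m
    (by omega)
  have hbr := mem_degreeGE_iff.mp (degreeGE_mul_le 𝒜 _ _ (Submodule.mul_mem_mul hbm hr)) m
    (by omega)
  have hub : (decompose 𝒜 (u * b) m : A) = t • (decompose 𝒜 b m : A) := by
    rw [← add_sub_cancel (decompose 𝒜 u 0 : A) u, add_mul, decompose_add, DirectSum.add_apply,
      Submodule.coe_add, hrb, add_zero, coe_decompose_mul_of_left_mem_zero 𝒜 (SetLike.coe_mem _),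
      ← ht, smul_one_mul]
  have hbu : (decompose 𝒜 (b * u) m : A) = t • (decompose 𝒜 b m : A) := by
    rw [← add_sub_cancel (decompose 𝒜 u 0 : A) u, mul_add, decompose_add, DirectSum.add_apply,
      Submodule.coe_add, hbr, add_zero, coe_decompose_mul_of_right_mem_zero 𝒜 (SetLike.coe_mem _),
      ← ht, mul_smul_one]
  have hzero : ((1 - c) * t) • (decompose 𝒜 b m : A) = 0 := by
    rw [mul_smul, sub_smul, one_smul, ← hbu, ← coe_decompose_smul, ← h, hub, hbu, sub_self]
  have ht0 : t = 0 := by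
    simpa [hbm0, sub_eq_zero, Ne.symm hc] using hzero
  refine mem_degreeGE_iff.mpr fun j hj => ?_
  rw [Nat.lt_one_iff.mp hj, ← ht, ht0, zero_smul]

theorem map_degreeOne_le_degreeGE_one (h0 : 𝒜 0 = Submodule.span K {(1 : A)}) {n : ℕ}
    {x : Fin n → A} (h1 : 𝒜 1 = Submodule.span K (Set.range x))
    (hqc : ∀ i : Fin n, ∃ a : A, a ≠ 0 ∧ ∃ c : K, c ≠ 1 ∧ x i * a = c • (a * x i))
    {f : A →ₐ[K] A} (hf : Function.Injective f) :
    (𝒜 1).map f.toLinearMap ≤ degreeGE 𝒜 1 := by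
  rw [h1, Submodule.map_span, Submodule.span_le]
  rintro _ ⟨_, ⟨i, rfl⟩, rfl⟩
  obtain ⟨a, ha, c, hc, hxa⟩ := hqc i
  rw [AlgHom.toLinearMap_apply]
  exact mem_degreeGE_one_of_mul_eq_smul_mul h0 ((map_ne_zero_iff f hf).mpr ha) hc
    (by simpa only [map_mul, map_smul] using congrArg f hxa)

end Field

end GradedAlgebra

open GradedAlgebra

/-- let `A = ⨁ Aᵢ` be an ℕ-graded `K`-algebra with `A₀ = K`,
generated by `A₁ = K x₁ ⊕ ⋯ ⊕ K xₙ`, such that each `xᵢ` `q`-commutes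
(with ratio `≠ 1`) with some nonzero element. Then for any algebra
automorphism `σ` and nonzero homogeneous `y` of degree `d`,
`σ(y) = y_d + y_{>d}` with `y_d ∈ A_d` nonzero and `y_{>d} ∈ ⨁_{i ≥ d+1} Aᵢ`. -/
theorem stmt8 (K : Type) [Field K] (A : Type) [Ring A] [Algebra K A]
    (𝒜 : ℕ → Submodule K A) [GradedAlgebra 𝒜]
    (h0 : 𝒜 0 = Submodule.span K {(1 : A)})
    (n : ℕ) (x : Fin n → A)
    (h1 : 𝒜 1 = Submodule.span K (Set.range x))
    (hgen : Algebra.adjoin K ((𝒜 1 : Submodule K A) : Set A) = ⊤)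
    (hqc : ∀ i : Fin n, ∃ a : A, a ≠ 0 ∧ ∃ c : K, c ≠ 1 ∧ x i * a = c • (a * x i))
    (σ : A ≃ₐ[K] A) (d : ℕ) (y : A) (hy : y ∈ 𝒜 d) (hy0 : y ≠ 0) :
    ∃ yd y' : A, yd ∈ 𝒜 d ∧ yd ≠ 0 ∧
      y' ∈ (⨆ i, ⨆ (_ : d + 1 ≤ i), 𝒜 i) ∧ σ y = yd + y' := by
  have hmap (τ : A ≃ₐ[K] A) : (𝒜 1).map (τ : A →ₐ[K] A).toLinearMap ≤ degreeGE 𝒜 1 :=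
    map_degreeOne_le_degreeGE_one h0 h1 hqc τ.injective
  have hσy : σ y ∈ degreeGE 𝒜 d := map_le_degreeGE hgen (hmap σ) d ⟨y, hy, rfl⟩
  refine ⟨_, _, SetLike.coe_mem (decompose 𝒜 (σ y) d), fun hσy₀ => hy0 ?_,
    sub_decompose_mem_degreeGE_succ hσy, (add_sub_cancel _ _).symm⟩
  have hσy' : σ y ∈ degreeGE 𝒜 (d + 1) := mem_degreeGE_succ_iff.mpr ⟨hσy, hσy₀⟩
  have hy' : y ∈ degreeGE 𝒜 (d + 1) := by
    simpa using map_degreeGE_le hgen (hmap σ.symm) (d + 1) (Submodule.mem_map_of_mem hσy')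
  rw [← decompose_of_mem_same 𝒜 hy]
  exact (mem_degreeGE_succ_iff.mp hy').2
end

section
/- In the quantum torus P(Λ) on generators T1,...,T6 with relations as specified, the elements z1 = T1 T4 T6 T3 and z2 = T2 T5 are central, and the center of P(Λ) equals the Laurent polynomial ring K[z1^{±1}, z2^{±1}]. -/
noncomputable section

/-- The matrix of exponents of `q` in the multiplicatively antisymmetric matrix
`Λ` of `U_q(sl4^+)`: `Λ i j = q ^ (E i j)`. -/
def Emat : Matrix (Fin 6) (Fin 6) ℤ :=
  !![0, 1, 1, -1, -1, 0;
     -1, 0, 1, 1, 0, -1;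
     -1, -1, 0, 0, 1, 1;
     1, -1, 0, 0, 1, -1;
     1, 0, -1, -1, 0, 1;
     0, 1, -1, 1, -1, 0]

/-- The monomial `T₁^{g₁} ⋯ T₆^{g₆}` in a quantum torus with invertible
generators `T : Fin 6 → Pˣ`. -/
def tmono {P : Type} [Ring P] (T : Fin 6 → Pˣ) (g : Fin 6 → ℤ) : P :=
  ((T 0 ^ g 0 * T 1 ^ g 1 * T 2 ^ g 2 * T 3 ^ g 3 * T 4 ^ g 4 * T 5 ^ g 5 : Pˣ) : P)

/-!
Conjugation by `T i` rescales the monomial `T^g` by `q ^ (Emat *ᵥ g) i`. As `q` is not a root of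
unity and the monomials form a basis, a central element is a combination of monomials whose
exponent lies in the kernel of `Emat`, namely the vectors `(a, b, a, a, b, a)`. Modulo scalars the
generators commute, so `z₁ ^ a * z₂ ^ b` is a nonzero multiple of the monomial with exponent
`(a, b, a, a, b, a)`; this gives both the centre and the linear independence of these products.
-/

namespace QuantumTorus

open scoped Matrix IsMulCommutative

theorem eq_zero_of_zpow_eq_one {G₀ : Type*} [GroupWithZero G₀] {q : G₀} (hq0 : q ≠ 0)
    (hq : ∀ n : ℕ, 0 < n → q ^ n ≠ 1) {m : ℤ} (h : q ^ m = 1) : m = 0 := by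
  have hfin : ¬IsOfFinOrder (Units.mk0 q hq0) := by
    rw [isOfFinOrder_iff_pow_eq_one]
    rintro ⟨n, hn, hqn⟩
    exact hq n hn (by simpa [Units.ext_iff] using hqn)
  exact injective_zpow_iff_not_isOfFinOrder.mpr hfin
    (by simpa [Units.ext_iff] using h : Units.mk0 q hq0 ^ m = Units.mk0 q hq0 ^ (0 : ℤ))

theorem zpow_mul_eq_of_mul_eq {G : Type*} [Group G] {u v z : G} (hz : Commute z v)
    (h : u * v = z * (v * u)) (n : ℤ) : u * v ^ n = z ^ n * (v ^ n * u) := by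
  have hconj : u * v * u⁻¹ = z * v := by rw [h]; group
  calc u * v ^ n = (u * v * u⁻¹) ^ n * u := by rw [conj_zpow]; group
    _ = z ^ n * (v ^ n * u) := by rw [hconj, hz.mul_zpow, mul_assoc]

theorem zpow_mul_zpow_eq_of_commute {G : Type*} [Group G] (s : Fin 6 → G)
    (h : ∀ i j, Commute (s i) (s j)) (a b : ℤ) :
    (s 0 * s 3 * s 5 * s 2) ^ a * (s 1 * s 4) ^ b =
      s 0 ^ a * s 1 ^ b * s 2 ^ a * s 3 ^ a * s 4 ^ b * s 5 ^ a := by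
  have := Subgroup.isMulCommutative_closure (k := Set.range s) (by
    rintro _ ⟨i, rfl⟩ _ ⟨j, rfl⟩; exact h i j)
  let t (i : Fin 6) : Subgroup.closure (Set.range s) := ⟨s i, Subgroup.subset_closure ⟨i, rfl⟩⟩
  have ht : (t 0 * t 3 * t 5 * t 2) ^ a * (t 1 * t 4) ^ b =
      t 0 ^ a * t 1 ^ b * t 2 ^ a * t 3 ^ a * t 4 ^ b * t 5 ^ a := by
    simp only [mul_zpow]; ac_rfl
  simpa [t] using congrArg Subtype.val ht

variable {K : Type*} [Field K]

section Algebra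

variable {P : Type*} [Ring P] [Algebra K P]

variable (K) in
def QCommute (c : K) (x y : P) : Prop := x * y = c • (y * x)

theorem QCommute.mul_right {a b : K} {w x y : P} (hx : QCommute K a w x)
    (hy : QCommute K b w y) : QCommute K (a * b) w (x * y) := by
  unfold QCommute at *
  rw [← mul_assoc, hx, smul_mul_assoc, mul_assoc, hy, mul_smul_comm, smul_smul, mul_assoc]

theorem QCommute.units_zpow_right {c : K} (hc : c ≠ 0) {u v : Pˣ}
    (h : QCommute K c (u : P) v) (n : ℤ) : QCommute K (c ^ n) (u : P) ↑(v ^ n) := by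
  let z : Pˣ := Units.map (algebraMap K P : K →* P) (Units.mk0 c hc)
  have hz : ∀ w : Pˣ, Commute z w := fun w => Units.ext (Algebra.commutes c (w : P))
  have key : u * v ^ n = z ^ n * (v ^ n * u) := by
    refine zpow_mul_eq_of_mul_eq (hz v) (Units.ext ?_) n
    simpa [z, QCommute, Algebra.smul_def] using h
  have hzn : ((z ^ n : Pˣ) : P) = algebraMap K P (c ^ n) := by
    rw [← map_zpow (Units.map (algebraMap K P : K →* P)), Units.coe_map,
      Units.val_zpow_eq_zpow_val, Units.val_mk0, MonoidHom.coe_coe]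
  have := congrArg Units.val key
  unfold QCommute
  rwa [Units.val_mul, Units.val_mul, hzn, ← Algebra.smul_def] at this

theorem QCommute.eq_one_of_commute_sum {ι : Type*} {b : ι → P} (hb : LinearIndependent K b)
    {u : Pˣ} {χ : ι → K} (hχ : ∀ g, QCommute K (χ g) (u : P) (b g)) {s : Finset ι} {c : ι → K}
    (hx : Commute (u : P) (∑ g ∈ s, c g • b g)) {g : ι} (hg : g ∈ s) (hc : c g ≠ 0) :
    χ g = 1 := by
  have hχ' : ∀ g, (u : P) * b g = χ g • (b g * u) := hχ
  have hdiff : (∑ g ∈ s, ((χ g - 1) * c g) • b g) * u = 0 := by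
    rw [← sub_eq_zero.mpr hx.eq]
    simp only [Finset.mul_sum, Finset.sum_mul, mul_smul_comm, smul_mul_assoc, hχ', smul_smul,
      sub_mul, one_mul, sub_smul, Finset.sum_sub_distrib, mul_comm (c _)]
  have := linearIndependent_iff'.mp hb s _ ((Units.mul_left_eq_zero u).mp hdiff) g hg
  exact sub_eq_zero.mp ((mul_eq_zero.mp this).resolve_right hc)

variable (K P) in
def scalarUnits : Subgroup Pˣ := (Units.map (algebraMap K P : K →* P)).range

theorem scalarUnits_le_center : scalarUnits K P ≤ Subgroup.center Pˣ := by
  rintro _ ⟨c, rfl⟩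
  exact Subgroup.mem_center_iff.mpr fun w => Units.ext (Algebra.commutes (c : K) (w : P)).symm

instance : (scalarUnits K P).Normal :=
  ⟨fun n hn g => by
    rwa [Subgroup.mem_center_iff.mp (scalarUnits_le_center hn) g, mul_inv_cancel_right]⟩

theorem exists_units_smul_of_mk_eq {u v : Pˣ}
    (h : (u : Pˣ ⧸ scalarUnits K P) = v) : ∃ c : Kˣ, (u : P) = (c : K) • (v : P) := by
  obtain ⟨c, hc⟩ := QuotientGroup.eq.mp h
  have hv : v = u * Units.map (algebraMap K P : K →* P) c := by rw [hc, mul_inv_cancel_left]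
  refine ⟨c⁻¹, ?_⟩
  rw [hv, Units.val_mul, Units.coe_map, ← mul_smul_comm, MonoidHom.coe_coe, Algebra.smul_def,
    ← map_mul, Units.inv_mul, map_one, mul_one]

theorem commute_mk_of_qcommute {c : K} (hc : c ≠ 0) {u v : Pˣ} (h : QCommute K c (u : P) v) :
    Commute (u : Pˣ ⧸ scalarUnits K P) v := by
  show ((u * v : Pˣ) : Pˣ ⧸ scalarUnits K P) = (v * u : Pˣ)
  refine QuotientGroup.eq.mpr ⟨(Units.mk0 c hc)⁻¹, ?_⟩
  rw [eq_inv_mul_iff_mul_eq]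
  ext
  rw [Units.val_mul, Units.val_mul, Units.coe_map, MonoidHom.coe_coe, Units.val_mul, h,
    ← Algebra.commutes, ← Algebra.smul_def, smul_smul, Units.val_inv_eq_inv_val, Units.val_mk0,
    inv_mul_cancel₀ hc, one_smul]

theorem units_zpow_mul_zpow_mem_adjoin (u v : Pˣ) (a b : ℤ) :
    ((u ^ a * v ^ b : Pˣ) : P) ∈
      Algebra.adjoin K {(u : P), (v : P), ((u⁻¹ : Pˣ) : P), ((v⁻¹ : Pˣ) : P)} := by
  let S := (Algebra.adjoin K {(u : P), (v : P), ((u⁻¹ : Pˣ) : P), ((v⁻¹ : Pˣ) : P)}).toSubmonoid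
  have hu : u ∈ S.units := ⟨Algebra.subset_adjoin (by simp), Algebra.subset_adjoin (by simp)⟩
  have hv : v ∈ S.units := ⟨Algebra.subset_adjoin (by simp), Algebra.subset_adjoin (by simp)⟩
  exact S.val_mem_of_mem_units (mul_mem (zpow_mem hu a) (zpow_mem hv b))

end Algebra

-- The exponent vector of `z₁ ^ a * z₂ ^ b` once its factors are sorted.
def centralExponent (a b : ℤ) : Fin 6 → ℤ := ![a, b, a, a, b, a]

theorem mulVec_centralExponent (a b : ℤ) : Emat *ᵥ centralExponent a b = 0 := by
  ext i
  fin_cases i <;> simp [Emat, centralExponent, Matrix.mulVec, dotProduct, Fin.sum_univ_six]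

theorem eq_centralExponent_of_mulVec_eq_zero {g : Fin 6 → ℤ} (h : Emat *ᵥ g = 0) :
    g = centralExponent (g 0) (g 1) := by
  have e : ∀ i, (Emat *ᵥ g) i = 0 := fun i => congrFun h i
  simp [Emat, Matrix.mulVec, dotProduct, Fin.sum_univ_six, Fin.forall_fin_succ] at e
  ext k
  fin_cases k <;> simp [centralExponent] <;> omega

section Generators

variable {P : Type} [Ring P] [Algebra K P] {q : K} {T : Fin 6 → Pˣ}

local notation "z₁" => T 0 * T 3 * T 5 * T 2
local notation "z₂" => T 1 * T 4

theorem qcommute_tmono (hq0 : q ≠ 0)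
    (hrel : ∀ i j, QCommute K (q ^ Emat i j) (T i : P) (T j)) (i : Fin 6) (g : Fin 6 → ℤ) :
    QCommute K (q ^ (Emat *ᵥ g) i) (T i : P) (tmono T g) := by
  have h : ∀ j, QCommute K (q ^ (Emat i j * g j)) (T i : P) ↑(T j ^ g j) := fun j => by
    simpa only [zpow_mul] using (hrel i j).units_zpow_right (zpow_ne_zero _ hq0) (g j)
  have hprod := (((((h 0).mul_right (h 1)).mul_right (h 2)).mul_right (h 3)).mul_right
    (h 4)).mul_right (h 5)
  simp only [← zpow_add₀ hq0] at hprod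
  simpa [tmono, Matrix.mulVec, dotProduct, Fin.sum_univ_six] using hprod

theorem commute_tmono {z : P} (h : ∀ i, Commute (T i : P) z) (g : Fin 6 → ℤ) :
    Commute (tmono T g) z := by
  simp only [tmono, Units.val_mul]
  exact (((((h 0).units_zpow_left _).mul_left ((h 1).units_zpow_left _)).mul_left
    ((h 2).units_zpow_left _)).mul_left ((h 3).units_zpow_left _)).mul_left
    ((h 4).units_zpow_left _) |>.mul_left ((h 5).units_zpow_left _)

theorem mem_center_of_forall_commute (hspan : Submodule.span K (Set.range (tmono T)) = ⊤)
    {z : P} (h : ∀ i, Commute (T i : P) z) : z ∈ Subalgebra.center K P := by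
  have hle : (⊤ : Submodule K P) ≤ Subalgebra.toSubmodule (Subalgebra.centralizer K {z}) := by
    rw [← hspan, Submodule.span_le]
    rintro _ ⟨g, rfl⟩
    exact (Subalgebra.mem_centralizer_iff K).mpr (by simpa using (commute_tmono h g).eq.symm)
  refine Subalgebra.mem_center_iff.mpr fun b => ?_
  exact ((Subalgebra.mem_centralizer_iff K).mp (hle (Submodule.mem_top : b ∈ ⊤)) z rfl).symm

theorem tmono_mem_center (hq0 : q ≠ 0)
    (hrel : ∀ i j, QCommute K (q ^ Emat i j) (T i : P) (T j))
    (hspan : Submodule.span K (Set.range (tmono T)) = ⊤) {g : Fin 6 → ℤ} (hg : Emat *ᵥ g = 0) :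
    tmono T g ∈ Subalgebra.center K P := by
  refine mem_center_of_forall_commute hspan fun i => ?_
  simpa [hg, QCommute, Commute, SemiconjBy] using qcommute_tmono hq0 hrel i g

theorem mulVec_eq_zero_of_mem_center (hq0 : q ≠ 0) (hq : ∀ n : ℕ, 0 < n → q ^ n ≠ 1)
    (hrel : ∀ i j, QCommute K (q ^ Emat i j) (T i : P) (T j))
    (hli : LinearIndependent K (tmono T)) {s : Finset (Fin 6 → ℤ)} {c : (Fin 6 → ℤ) → K}
    (hx : ∑ g ∈ s, c g • tmono T g ∈ Subalgebra.center K P) {g : Fin 6 → ℤ} (hg : g ∈ s)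
    (hc : c g ≠ 0) : Emat *ᵥ g = 0 :=
  funext fun i => eq_zero_of_zpow_eq_one hq0 hq <|
    QCommute.eq_one_of_commute_sum hli (qcommute_tmono hq0 hrel i)
      (Subalgebra.mem_center_iff.mp hx (T i)) hg hc

theorem exists_units_smul_tmono (hq0 : q ≠ 0)
    (hrel : ∀ i j, QCommute K (q ^ Emat i j) (T i : P) (T j)) (a b : ℤ) :
    ∃ c : Kˣ, ((z₁ ^ a * z₂ ^ b : Pˣ) : P) = (c : K) • tmono T (centralExponent a b) := by
  refine exists_units_smul_of_mk_eq
    (v := T 0 ^ a * T 1 ^ b * T 2 ^ a * T 3 ^ a * T 4 ^ b * T 5 ^ a) ?_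
  have hcomm i j := commute_mk_of_qcommute (zpow_ne_zero _ hq0) (hrel i j)
  simpa using zpow_mul_zpow_eq_of_commute (fun i => (T i : Pˣ ⧸ scalarUnits K P)) hcomm a b

theorem zpow_mul_zpow_mem_center (hq0 : q ≠ 0)
    (hrel : ∀ i j, QCommute K (q ^ Emat i j) (T i : P) (T j))
    (hspan : Submodule.span K (Set.range (tmono T)) = ⊤) (a b : ℤ) :
    ((z₁ ^ a * z₂ ^ b : Pˣ) : P) ∈ Subalgebra.center K P := by
  obtain ⟨c, hc⟩ := exists_units_smul_tmono hq0 hrel a b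
  rw [hc]
  exact Subalgebra.smul_mem _ (tmono_mem_center hq0 hrel hspan (mulVec_centralExponent a b)) _

theorem tmono_mem_adjoin (hq0 : q ≠ 0) (hrel : ∀ i j, QCommute K (q ^ Emat i j) (T i : P) (T j))
    {g : Fin 6 → ℤ} (hg : Emat *ᵥ g = 0) :
    tmono T g ∈ Algebra.adjoin K
      {((z₁ : Pˣ) : P), ((z₂ : Pˣ) : P), (((z₁ : Pˣ)⁻¹ : Pˣ) : P), (((z₂ : Pˣ)⁻¹ : Pˣ) : P)} := by
  obtain ⟨c, hc⟩ := exists_units_smul_tmono hq0 hrel (g 0) (g 1)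
  have ht : tmono T g = ((c⁻¹ : Kˣ) : K) • ((z₁ ^ g 0 * z₂ ^ g 1 : Pˣ) : P) := by
    rw [hc, smul_smul, Units.inv_mul, one_smul, ← eq_centralExponent_of_mulVec_eq_zero hg]
  rw [ht]
  exact Subalgebra.smul_mem _ (units_zpow_mul_zpow_mem_adjoin _ _ _ _) _

theorem center_le_adjoin (hq0 : q ≠ 0) (hq : ∀ n : ℕ, 0 < n → q ^ n ≠ 1)
    (hrel : ∀ i j, QCommute K (q ^ Emat i j) (T i : P) (T j))
    (hli : LinearIndependent K (tmono T)) (hspan : Submodule.span K (Set.range (tmono T)) = ⊤) :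
    Subalgebra.center K P ≤ Algebra.adjoin K
      {((z₁ : Pˣ) : P), ((z₂ : Pˣ) : P), (((z₁ : Pˣ)⁻¹ : Pˣ) : P), (((z₂ : Pˣ)⁻¹ : Pˣ) : P)} := by
  intro x hx
  obtain ⟨c, rfl⟩ := Finsupp.mem_span_range_iff_exists_finsupp.mp
    (hspan ▸ Submodule.mem_top : x ∈ Submodule.span K (Set.range (tmono T)))
  refine Subalgebra.sum_mem _ fun g hg => Subalgebra.smul_mem _ ?_ _
  exact tmono_mem_adjoin hq0 hrel
    (mulVec_eq_zero_of_mem_center hq0 hq hrel hli hx hg (Finsupp.mem_support_iff.mp hg))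

theorem linearIndependent_zpow_mul_zpow (hq0 : q ≠ 0)
    (hrel : ∀ i j, QCommute K (q ^ Emat i j) (T i : P) (T j))
    (hli : LinearIndependent K (tmono T)) :
    LinearIndependent K (fun p : ℤ × ℤ => ((z₁ ^ p.1 * z₂ ^ p.2 : Pˣ) : P)) := by
  choose c hc using exists_units_smul_tmono hq0 hrel
  have hinj : Function.Injective fun p : ℤ × ℤ => centralExponent p.1 p.2 :=
    fun p p' h => Prod.ext (congrFun h 0) (congrFun h 1)
  convert (hli.comp _ hinj).units_smul (fun p => c p.1 p.2) using 1
  exact funext fun p => hc p.1 p.2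

end Generators

end QuantumTorus

open QuantumTorus in
/-- in the quantum torus `P(Λ)`, the elements `z₁ = T₁T₄T₆T₃`
and `z₂ = T₂T₅` are central, and the center of `P(Λ)` is the Laurent
polynomial ring `K[z₁^{±1}, z₂^{±1}]`. -/
theorem stmt11 (K : Type) [Field K] (q : K) (hq0 : q ≠ 0)
    (hq : ∀ n : ℕ, 0 < n → q ^ n ≠ 1)
    (P : Type) [Ring P] [Algebra K P] (T : Fin 6 → Pˣ)
    (hrel : ∀ i j : Fin 6, (T i : P) * T j = (q ^ Emat i j) • ((T j : P) * T i))
    (hli : LinearIndependent K (tmono T))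
    (hspan : Submodule.span K (Set.range (tmono T)) = ⊤) :
    ((T 0 * T 3 * T 5 * T 2 : Pˣ) : P) ∈ Subalgebra.center K P ∧
    ((T 1 * T 4 : Pˣ) : P) ∈ Subalgebra.center K P ∧
    (Subalgebra.center K P : Subalgebra K P) =
      Algebra.adjoin K
        {((T 0 * T 3 * T 5 * T 2 : Pˣ) : P), ((T 1 * T 4 : Pˣ) : P),
         (((T 0 * T 3 * T 5 * T 2 : Pˣ)⁻¹ : Pˣ) : P), (((T 1 * T 4 : Pˣ)⁻¹ : Pˣ) : P)} ∧
    LinearIndependent K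
      (fun p : ℤ × ℤ =>
        (((T 0 * T 3 * T 5 * T 2 : Pˣ) ^ p.1 * (T 1 * T 4 : Pˣ) ^ p.2 : Pˣ) : P)) := by
  have hz (a b : ℤ) := zpow_mul_zpow_mem_center hq0 hrel hspan a b
  refine ⟨by simpa using hz 1 0, by simpa using hz 0 1,
    le_antisymm (center_le_adjoin hq0 hq hrel hli hspan) (Algebra.adjoin_le ?_),
    linearIndependent_zpow_mul_zpow hq0 hrel hli⟩
  rintro _ (rfl | rfl | rfl | rfl)
  · simpa only [SetLike.mem_coe, zpow_one, zpow_zero, mul_one] using hz 1 0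
  · simpa only [SetLike.mem_coe, zpow_one, zpow_zero, one_mul] using hz 0 1
  · simpa only [SetLike.mem_coe, zpow_neg_one, zpow_zero, mul_one] using hz (-1) 0
  · simpa only [SetLike.mem_coe, zpow_neg_one, zpow_zero, one_mul] using hz 0 (-1)
end
end
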